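/- On a spherical bigon, ∂(L₁+L₂)/∂K₁ = cos(r₁)·sin²(r₁)·(2β₁ − sin(2β₁)), which is strictly positive for r₁ ∈ (0, π/2) and β₁ ∈ (0, π). -/

import Mathlib

open Real Set

/-! Since `k₁ sin r₁ = cos r₁`, `L₁ = 2 β₁ cos r₁`, and along `r₁ = arccot (exp K)` one has
`dr₁/dK = -sin r₁ cos r₁`; differentiating `cos r₁` gives the term `2 β₁ cos r₁ sin² r₁`.
The remaining contributions, `∂β₁/∂K₁` from `L₁` and `∂β₂/∂k₁` from `L₂`, are expressed through
`β₁` by the chord identity `sin r₁ sin β₁ = sin r₂ sin β₂` and add up to `-cos r₁ sin² r₁ sin 2β₁`.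
Positivity is `sin x < x` for `x > 0`. -/

/-- The inverse cotangent, valued in `(0, π)`. -/
noncomputable def arccot (x : ℝ) : ℝ := π / 2 - Real.arctan x

lemma arccot_pos (x : ℝ) : 0 < arccot x := by
  unfold arccot
  linarith [arctan_lt_pi_div_two x]

lemma sin_two_mul_arccot (x : ℝ) : sin (2 * arccot x) = 2 * x / (1 + x ^ 2) := by
  rw [sin_two_mul, arccot, sin_pi_div_two_sub, cos_pi_div_two_sub, cos_arctan, sin_arctan]
  field_simp
  rw [sq_sqrt (by positivity)]

lemma hasDerivAt_arccot (x : ℝ) : HasDerivAt arccot (-(1 / (1 + x ^ 2))) x :=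
  (hasDerivAt_arctan x).const_sub (π / 2)

lemma arccot_cot {r : ℝ} (hr : r ∈ Ioo 0 π) : arccot (cot r) = r := by
  have h : cot r = tan (π / 2 - r) := by
    rw [tan_pi_div_two_sub, tan_eq_sin_div_cos, inv_div, cot_eq_cos_div_sin]
  rw [arccot, h, arctan_tan (by linarith [hr.2]) (by linarith [hr.1])]
  ring

lemma Ioo_zero_pi_div_two_subset : Ioo 0 (π / 2) ⊆ Ioo 0 π :=
  Ioo_subset_Ioo_right (by linarith [pi_pos])

lemma cos_pos_of_mem_Ioo_zero_pi_div_two {r : ℝ} (hr : r ∈ Ioo 0 (π / 2)) : 0 < cos r :=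
  cos_pos_of_mem_Ioo ⟨by linarith [hr.1, pi_pos], hr.2⟩

lemma cot_pos_of_mem_Ioo {r : ℝ} (hr : r ∈ Ioo 0 (π / 2)) : 0 < cot r := by
  have hs := sin_pos_of_mem_Ioo (Ioo_zero_pi_div_two_subset hr)
  have hc := cos_pos_of_mem_Ioo_zero_pi_div_two hr
  rw [cot_eq_cos_div_sin]
  positivity

lemma hasDerivAt_arccot_exp {r : ℝ} (hr : r ∈ Ioo 0 (π / 2)) :
    HasDerivAt (fun K => arccot (exp K)) (-(sin r * cos r)) (log (cot r)) := by
  have hs := sin_pos_of_mem_Ioo (Ioo_zero_pi_div_two_subset hr)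
  have hc := cos_pos_of_mem_Ioo_zero_pi_div_two hr
  have hcot := cot_pos_of_mem_Ioo hr
  have h := (hasDerivAt_arccot _).comp _ (hasDerivAt_exp (log (cot r)))
  rw [exp_log hcot] at h
  refine h.congr_deriv ?_
  rw [cot_eq_cos_div_sin]
  field_simp
  linear_combination sin_sq_add_cos_sq r

/-- With `k = k_{3-i}` and `r = rᵢ`, `bigonCot k r θ = cot βᵢ` and `bigonArc k r θ = lᵢ`. -/
noncomputable def bigonCot (k r θ : ℝ) : ℝ := (k * sin r + cos r * cos θ) / sin θ

noncomputable def bigonArc (k r θ : ℝ) : ℝ := 2 * arccot (bigonCot k r θ) * sin r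

lemma hasDerivAt_bigonArc_radius (k r θ : ℝ) :
    HasDerivAt (fun r => bigonArc k r θ)
      (2 * (arccot (bigonCot k r θ) * cos r
        - sin r * (k * cos r - sin r * cos θ) / (sin θ * (1 + bigonCot k r θ ^ 2)))) r := by
  have hcot : HasDerivAt (fun r => bigonCot k r θ) ((k * cos r - sin r * cos θ) / sin θ) r := by
    refine ((((hasDerivAt_sin r).const_mul k).add
      ((hasDerivAt_cos r).mul_const (cos θ))).div_const (sin θ)).congr_deriv ?_
    ring
  refine (((hasDerivAt_arccot _).comp r hcot).const_mul 2 |>.mul (hasDerivAt_sin r)).congr_deriv ?_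
  rw [Function.comp_apply]
  field_simp
  ring

lemma hasDerivAt_bigonArc_exp (r θ K : ℝ) :
    HasDerivAt (fun K => bigonArc (exp K) r θ)
      (-(2 * exp K * sin r ^ 2 / (sin θ * (1 + bigonCot (exp K) r θ ^ 2)))) K := by
  have hcot : HasDerivAt (fun K => bigonCot (exp K) r θ) (exp K * sin r / sin θ) K :=
    (((hasDerivAt_exp K).mul_const (sin r)).add_const (cos r * cos θ)).div_const (sin θ)
  refine (((hasDerivAt_arccot _).comp K hcot).const_mul 2 |>.mul_const (sin r)).congr_deriv ?_
  field_simp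

lemma hasDerivAt_exp_mul_bigonArc (k θ : ℝ) {r : ℝ} (hr : r ∈ Ioo 0 (π / 2)) :
    HasDerivAt (fun K => exp K * bigonArc k (arccot (exp K)) θ)
      (2 * cos r * (sin r ^ 2 * arccot (bigonCot k r θ)
        + cos r * sin r * (k * cos r - sin r * cos θ) / (sin θ * (1 + bigonCot k r θ ^ 2))))
      (log (cot r)) := by
  have hs := sin_pos_of_mem_Ioo (Ioo_zero_pi_div_two_subset hr)
  have hc := cos_pos_of_mem_Ioo_zero_pi_div_two hr
  have hcot := cot_pos_of_mem_Ioo hr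
  have hrc : arccot (cot r) = r := arccot_cot (Ioo_zero_pi_div_two_subset hr)
  have hrK : arccot (exp (log (cot r))) = r := by rw [exp_log hcot, hrc]
  have h := (hasDerivAt_exp _).mul
    ((hasDerivAt_bigonArc_radius k r θ).comp_of_eq _ (hasDerivAt_arccot_exp hr) hrK.symm)
  simp only [Function.comp_apply, exp_log hcot, hrc] at h
  refine h.congr_deriv ?_
  rw [bigonArc, cot_eq_cos_div_sin]
  field_simp
  linear_combination
    (-(arccot (bigonCot k r θ) * (1 + bigonCot k r θ ^ 2))) * sin_sq_add_cos_sq r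

/-- Since `1 + cot² β = 1 / sin² β`, this is `sin r₁ sin β₁ = sin r₂ sin β₂`:
both sides are half the chord through the two vertices of the bigon. -/
lemma sin_sq_mul_one_add_bigonCot_sq {r₁ r₂ θ : ℝ} (h₁ : sin r₁ ≠ 0) (h₂ : sin r₂ ≠ 0)
    (hθ : sin θ ≠ 0) :
    sin r₁ ^ 2 * (1 + bigonCot (cot r₁) r₂ θ ^ 2)
      = sin r₂ ^ 2 * (1 + bigonCot (cot r₂) r₁ θ ^ 2) := by
  rw [bigonCot, bigonCot, cot_eq_cos_div_sin, cot_eq_cos_div_sin]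
  field_simp
  linear_combination (sin θ ^ 2 * sin r₂ ^ 2) * sin_sq_add_cos_sq r₁
    - (sin θ ^ 2 * sin r₁ ^ 2) * sin_sq_add_cos_sq r₂
    - (cos r₁ ^ 2 * sin r₂ ^ 2 - sin r₁ ^ 2 * cos r₂ ^ 2) * sin_sq_add_cos_sq θ

lemma cos_mul_sin_sq_mul_two_mul_sub_sin_pos {r β : ℝ} (hr : r ∈ Ioo 0 (π / 2)) (hβ : 0 < β) :
    0 < cos r * sin r ^ 2 * (2 * β - sin (2 * β)) := by
  have hs := sin_pos_of_mem_Ioo (Ioo_zero_pi_div_two_subset hr)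
  have hc := cos_pos_of_mem_Ioo_zero_pi_div_two hr
  have := sub_pos.2 (sin_lt (by positivity : 0 < 2 * β))
  positivity

lemma hasDerivAt_bigonLengthSum {r₁ r₂ θ : ℝ} (hr₁ : r₁ ∈ Ioo 0 (π / 2)) (h₂ : sin r₂ ≠ 0)
    (hθ : sin θ ≠ 0) :
    HasDerivAt
      (fun K => exp K * bigonArc (cot r₂) (arccot (exp K)) θ + cot r₂ * bigonArc (exp K) r₂ θ)
      (cos r₁ * sin r₁ ^ 2 * (2 * arccot (bigonCot (cot r₂) r₁ θ)
        - sin (2 * arccot (bigonCot (cot r₂) r₁ θ))))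
      (log (cot r₁)) := by
  have hs := sin_pos_of_mem_Ioo (Ioo_zero_pi_div_two_subset hr₁)
  have hc := cos_pos_of_mem_Ioo_zero_pi_div_two hr₁
  have hcot := cot_pos_of_mem_Ioo hr₁
  have key := sin_sq_mul_one_add_bigonCot_sq hs.ne' h₂ hθ
  have h := (hasDerivAt_exp_mul_bigonArc (cot r₂) θ hr₁).add
    ((hasDerivAt_bigonArc_exp r₂ θ _).const_mul (cot r₂))
  rw [exp_log hcot] at h
  refine h.congr_deriv ?_
  rw [sin_two_mul_arccot]
  set u := bigonCot (cot r₂) r₁ θ with hu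
  set v := bigonCot (cot r₁) r₂ θ
  have hv : sin r₂ ^ 2 / (1 + v ^ 2) = sin r₁ ^ 2 / (1 + u ^ 2) := by
    rw [div_eq_div_iff (by positivity) (by positivity)]
    linear_combination -key
  have hus : u * sin θ = cot r₂ * sin r₁ + cos r₁ * cos θ := by
    rw [hu, bigonCot]; field_simp
  rw [show cot r₂ * -(2 * cot r₁ * sin r₂ ^ 2 / (sin θ * (1 + v ^ 2)))
      = -(2 * cot r₂ * cot r₁ / sin θ * (sin r₂ ^ 2 / (1 + v ^ 2))) by field_simp, hv,
    cot_eq_cos_div_sin r₁]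
  field_simp
  linear_combination sin r₁ * hus + cot r₂ * sin_sq_add_cos_sq r₁

/-- On a spherical bigon, with `K₂` fixed and `K₁ = ln (cot r₁)` varying,
`∂(L₁+L₂)/∂K₁ = cos r₁ · sin² r₁ · (2β₁ - sin 2β₁)`, which is strictly positive. -/
theorem dL1_plus_L2_dK1_pos (r₁ r₂ θ k₂ β₁ : ℝ)
    (hr₁ : r₁ ∈ Ioo 0 (π / 2)) (hr₂ : r₂ ∈ Ioo 0 (π / 2)) (hθ : θ ∈ Ioc 0 (π / 2))
    (hk₂ : k₂ = Real.cot r₂)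
    (hβ₁ : β₁ = arccot ((k₂ * Real.sin r₁ + Real.cos r₁ * Real.cos θ) / Real.sin θ))
    (F : ℝ → ℝ)
    (hF : ∀ K : ℝ, F K =
      -- L₁ as a function of K₁ = K (with r₁ = arccot (exp K)):
      Real.exp K *
        (2 * arccot ((k₂ * Real.sin (arccot (Real.exp K))
            + Real.cos (arccot (Real.exp K)) * Real.cos θ) / Real.sin θ)
          * Real.sin (arccot (Real.exp K)))
      -- plus L₂ as a function of K₁ = K (with k₁ = exp K, r₂ fixed):
      + k₂ *
        (2 * arccot ((Real.exp K * Real.sin r₂ + Real.cos r₂ * Real.cos θ) / Real.sin θ)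
          * Real.sin r₂)) :
    HasDerivAt F (Real.cos r₁ * (Real.sin r₁)^2 * (2 * β₁ - Real.sin (2 * β₁)))
      (Real.log (Real.cot r₁)) ∧
    0 < Real.cos r₁ * (Real.sin r₁)^2 * (2 * β₁ - Real.sin (2 * β₁)) := by
  subst hk₂ hβ₁
  have hF' : F = fun K =>
      exp K * bigonArc (cot r₂) (arccot (exp K)) θ + cot r₂ * bigonArc (exp K) r₂ θ :=
    funext hF
  have hs₂ := sin_pos_of_mem_Ioo (Ioo_zero_pi_div_two_subset hr₂)
  have hsθ := sin_pos_of_mem_Ioo (Ioc_subset_Ioo_right (by linarith [pi_pos]) hθ)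
  rw [hF']
  exact ⟨hasDerivAt_bigonLengthSum hr₁ hs₂.ne' hsθ.ne',
    cos_mul_sin_sq_mul_two_mul_sub_sin_pos hr₁ (arccot_pos _)⟩
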